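/- Fix a complex number q with |q| < 1 and define, for x \in \mathbb{C}, \(RR(x) = \sum_{n\ge 0} \frac{q^{n^2} x^n}{(q;q)_n}\). Then for every x \in \mathbb{C}: \(RR(x) = RR(qx) + q x\, RR(q^2 x)\). -/

import Mathlib

/-- The finite q-Pochhammer symbol `(a; q)_n = ∏_{m=0}^{n-1} (1 - a qᵐ)`. -/
noncomputable def qPoch (a q : ℂ) (n : ℕ) : ℂ := ∏ m ∈ Finset.range n, (1 - a * q ^ m)

/-- The Rogers–Ramanujan series `RR(x) = ∑_{n≥0} q^{n²} xⁿ / (q;q)_n`. -/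
noncomputable def RR (q x : ℂ) : ℂ := ∑' n : ℕ, q ^ (n ^ 2) * x ^ n / qPoch q q n

/-!
Since `(q;q)_{n+1} = (q;q)_n (1 - q^{n+1})`, the `(n+1)`-st summand of `RR(x)` minus that of
`RR(qx)` is `qx` times the `n`-th summand of `RR(q²x)`, and the constant summands cancel.
The ratio of consecutive summands tends to `0`, so all the series converge and may be
subtracted termwise.
-/

open Filter Topology

theorem qPoch_succ (a q : ℂ) (n : ℕ) : qPoch a q (n + 1) = qPoch a q n * (1 - a * q ^ n) :=
  Finset.prod_range_succ _ n

theorem one_sub_mul_pow_ne_zero {a q : ℂ} (ha : ‖a‖ < 1) (hq : ‖q‖ ≤ 1) (m : ℕ) :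
    1 - a * q ^ m ≠ 0 := by
  have hlt : ‖a * q ^ m‖ < 1 := by
    rw [norm_mul, norm_pow]
    exact (mul_le_of_le_one_right (norm_nonneg a) (pow_le_one₀ (norm_nonneg q) hq)).trans_lt ha
  intro h
  rw [← sub_eq_zero.mp h, norm_one] at hlt
  exact hlt.false

theorem qPoch_ne_zero {a q : ℂ} (ha : ‖a‖ < 1) (hq : ‖q‖ ≤ 1) (n : ℕ) :
    qPoch a q n ≠ 0 :=
  Finset.prod_ne_zero_iff.mpr fun m _ => one_sub_mul_pow_ne_zero ha hq m

noncomputable def rrTerm (q x : ℂ) (n : ℕ) : ℂ := q ^ (n ^ 2) * x ^ n / qPoch q q n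

section
variable {q : ℂ} (hq : ‖q‖ < 1)
include hq

theorem rrTerm_succ (x : ℂ) (n : ℕ) :
    rrTerm q x (n + 1) = rrTerm q x n * (q ^ (2 * n + 1) * x / (1 - q * q ^ n)) := by
  have := qPoch_ne_zero hq hq.le n
  have := one_sub_mul_pow_ne_zero hq hq.le n
  rw [rrTerm, rrTerm, qPoch_succ, show (n + 1) ^ 2 = n ^ 2 + (2 * n + 1) by ring]
  field_simp
  ring

theorem tendsto_rrTerm_ratio (x : ℂ) :
    Tendsto (fun n : ℕ => q ^ (2 * n + 1) * x / (1 - q * q ^ n)) atTop (𝓝 0) := by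
  have hpow := tendsto_pow_atTop_nhds_zero_of_norm_lt_one hq
  have hnum : Tendsto (fun n : ℕ => q ^ (2 * n + 1) * x) atTop (𝓝 0) := by
    have := ((hpow.comp (tendsto_id.const_mul_atTop' two_pos)).mul_const (q * x))
    simpa [pow_succ, mul_assoc] using this
  have hden : Tendsto (fun n : ℕ => 1 - q * q ^ n) atTop (𝓝 1) := by
    simpa using (hpow.const_mul q).const_sub 1
  simpa only [zero_div, Pi.div_def] using hnum.div hden one_ne_zero

theorem summable_rrTerm (x : ℂ) : Summable (rrTerm q x) := by
  refine summable_of_ratio_norm_eventually_le (r := 1 / 2) (by norm_num) ?_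
  have hsmall := (tendsto_rrTerm_ratio hq x).norm.eventually
    (gt_mem_nhds (by norm_num : ‖(0 : ℂ)‖ < 1 / 2))
  filter_upwards [hsmall] with n hn
  rw [rrTerm_succ hq, norm_mul, mul_comm]
  exact mul_le_mul_of_nonneg_right hn.le (norm_nonneg _)

theorem rrTerm_succ_sub_rrTerm_succ (x : ℂ) (n : ℕ) :
    rrTerm q x (n + 1) - rrTerm q (q * x) (n + 1) = q * x * rrTerm q (q ^ 2 * x) n := by
  have := qPoch_ne_zero hq hq.le n
  have := one_sub_mul_pow_ne_zero hq hq.le n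
  rw [rrTerm, rrTerm, rrTerm, qPoch_succ, show (n + 1) ^ 2 = n ^ 2 + (2 * n + 1) by ring]
  field_simp
  ring

end

/-- The `q`-shift equation for the Rogers–Ramanujan series:
for `|q| < 1` and all `x ∈ ℂ`, `RR(x) = RR(qx) + qx · RR(q²x)`. -/
theorem RR_q_shift_equation (q : ℂ) (hq : ‖q‖ < 1) (x : ℂ) :
    RR q x = RR q (q * x) + q * x * RR q (q ^ 2 * x) := by
  have hx := summable_rrTerm hq x
  have hqx := summable_rrTerm hq (q * x)
  have hdiff : RR q x - RR q (q * x) = q * x * RR q (q ^ 2 * x) := calc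
    RR q x - RR q (q * x) = ∑' n, (rrTerm q x n - rrTerm q (q * x) n) := (hx.tsum_sub hqx).symm
    _ = ∑' n, (rrTerm q x (n + 1) - rrTerm q (q * x) (n + 1)) := by
      rw [(hx.sub hqx).tsum_eq_zero_add]
      simp [rrTerm]
    _ = q * x * RR q (q ^ 2 * x) := by
      simp_rw [rrTerm_succ_sub_rrTerm_succ hq]
      exact tsum_mul_left
  linear_combination hdiff
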